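/- arXiv:1805.03151 — 2 statements merged into one kernel-verified Lean document; each statement's English description precedes it below -/
import Mathlib

section
/- Let Σ be a finite alphabet of size r ≥ 2. Define the entropy of an ω-language L ⊆ Σ^ω as H(L) = limsup_{n→∞} (1/n) · log_r |A_n(L)|, where A_n(L) is the set of length-n prefixes of words in L. Then for any nonempty L, the Hausdorff dimension of L (with respect to the metric d(u,v) = r^{-(common prefix length)}) is at most H(L). -/
open Filter MeasureTheory Set
open scoped ENNReal

open scoped Classical in
noncomputable def wedist {α : Type*} [Fintype α] (u v : ℕ → α) : ℝ≥0∞ :=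
  if u = v then 0 else ((Fintype.card α : ℝ≥0∞))⁻¹ ^ (PiNat.firstDiff u v)

/-- The metric space on `ℕ → α` with `d(u,v) = r^{-n}`, `r = |α|`,
`n` the length of the longest common prefix. -/
noncomputable def wspace (α : Type*) [Fintype α] : EMetricSpace (ℕ → α) where
  edist := wedist
  edist_self u := by simp [wedist]
  edist_comm u v := by
    rcases eq_or_ne u v with h | h
    · simp [wedist, h]
    · simp only [wedist, if_neg h, if_neg h.symm, PiNat.firstDiff_comm]
  edist_triangle u v w := by
    rcases eq_or_ne u w with huw | huw
    · simp [wedist, huw]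
    · rcases eq_or_ne u v with huv | huv
      · subst huv; simp [wedist]
      · rcases eq_or_ne v w with hvw | hvw
        · subst hvw; simp [wedist, huw]
        · have hne : Nonempty α := ⟨u 0⟩
          have hq : ((Fintype.card α : ℝ≥0∞))⁻¹ ≤ 1 := by
            rw [ENNReal.inv_le_one]
            exact_mod_cast Nat.one_le_iff_ne_zero.mpr Fintype.card_ne_zero
          have hmin := PiNat.min_firstDiff_le u v w huw
          simp only [wedist, if_neg huw, if_neg huv, if_neg hvw]
          calc ((Fintype.card α : ℝ≥0∞))⁻¹ ^ PiNat.firstDiff u w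
              ≤ ((Fintype.card α : ℝ≥0∞))⁻¹ ^
                  (min (PiNat.firstDiff u v) (PiNat.firstDiff v w)) :=
                pow_le_pow_of_le_one (by simp) hq hmin
            _ ≤ _ := by
                rcases min_cases (PiNat.firstDiff u v) (PiNat.firstDiff v w) with ⟨h1, _⟩ | ⟨h1, _⟩ <;> rw [h1]
                · exact le_self_add
                · exact le_add_self
  eq_of_edist_eq_zero := by
    intro u v h
    by_contra hne
    simp only [wedist, if_neg hne] at h
    exact pow_ne_zero _ (ENNReal.inv_ne_zero.mpr (ENNReal.natCast_ne_top _)) h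

/-- Hausdorff dimension of an ω-language in the metric `d(u,v) = |α|^{-(common prefix length)}`. -/
noncomputable def wdimH {α : Type*} [Fintype α] (L : Set (ℕ → α)) : ℝ≥0∞ :=
  @dimH _ (wspace α) L

/-- The set of length-`n` prefixes of words of `L`. -/
def prefixSet {α : Type*} [Fintype α] (L : Set (ℕ → α)) (n : ℕ) : Set (Fin n → α) :=
  {w | ∃ x ∈ L, ∀ i : Fin n, x i.1 = w i}

/-- Entropy of an ω-language: `limsup (1/n) log_r |A_n(L)|`. -/
noncomputable def entropy {α : Type*} [Fintype α] (L : Set (ℕ → α)) : ℝ :=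
  Filter.limsup (fun n : ℕ =>
    Real.logb (Fintype.card α) ((prefixSet L n).ncard) / n) Filter.atTop

theorem dimH_le_entropy {α : Type*} [Fintype α] (hcard : 2 ≤ Fintype.card α)
    (L : Set (ℕ → α)) (hL : L.Nonempty) :
    wdimH L ≤ ENNReal.ofReal (entropy L) := by
  classical
  set r := Fintype.card α with hrdef
  have hr1 : (1:ℝ) < r := by exact_mod_cast lt_of_lt_of_le one_lt_two hcard
  have hr0 : (r:ℝ≥0∞) ≠ 0 := by
    simp only [ne_eq, Nat.cast_eq_zero]; omega
  have hrtop : (r:ℝ≥0∞) ≠ ⊤ := ENNReal.natCast_ne_top _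
  have hr1e : (1:ℝ≥0∞) < r := by exact_mod_cast lt_of_lt_of_le one_lt_two hcard
  -- prefix sets are nonempty
  have hne : ∀ n, (prefixSet L n).Nonempty := by
    intro n
    obtain ⟨x, hx⟩ := hL
    exact ⟨fun i => x i.1, x, hx, fun i => rfl⟩
  have hNpos : ∀ n, 0 < (prefixSet L n).ncard := fun n =>
    (Set.ncard_pos (Set.toFinite _)).2 (hne n)
  have hN1 : ∀ n, (1:ℝ) ≤ ((prefixSet L n).ncard : ℝ) := fun n => by
    exact_mod_cast hNpos n
  -- the sequence in the limsup is bounded above by 1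
  have hub : ∀ n : ℕ, Real.logb r ((prefixSet L n).ncard) / n ≤ 1 := by
    intro n
    rcases Nat.eq_zero_or_pos n with h0 | hn
    · simp [h0]
    · rw [div_le_one (by exact_mod_cast hn)]
      have hle : ((prefixSet L n).ncard : ℝ) ≤ (r:ℝ) ^ n := by
        have : (prefixSet L n).ncard ≤ r ^ n := by
          calc (prefixSet L n).ncard ≤ (Set.univ : Set (Fin n → α)).ncard :=
                Set.ncard_le_ncard (Set.subset_univ _) (Set.toFinite _)
            _ = r ^ n := by
                rw [Set.ncard_univ, Nat.card_eq_fintype_card, Fintype.card_fun,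
                  Fintype.card_fin]
        exact_mod_cast this
      calc Real.logb r ((prefixSet L n).ncard) ≤ Real.logb r ((r:ℝ)^n) :=
            Real.logb_le_logb_of_le hr1 (by linarith [hN1 n]) hle
        _ = n := by
            rw [Real.logb_pow, Real.logb_self_eq_one hr1]
            simp
  have hbdd : Filter.IsBoundedUnder (· ≤ ·) Filter.atTop
      (fun n : ℕ => Real.logb r ((prefixSet L n).ncard) / n) :=
    Filter.isBoundedUnder_of ⟨1, hub⟩
  -- entropy is nonnegative
  have hent0 : 0 ≤ entropy L := by
    refine Filter.le_limsup_of_frequently_le ?_ hbdd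
    refine (Filter.Eventually.of_forall fun n => ?_).frequently
    exact div_nonneg (Real.logb_nonneg hr1 (hN1 n)) (Nat.cast_nonneg n)
  -- set up the metric space
  rw [wdimH]
  letI : EMetricSpace (ℕ → α) := wspace α
  letI : MeasurableSpace (ℕ → α) := borel _
  haveI : BorelSpace (ℕ → α) := ⟨rfl⟩
  refine dimH_le fun d' hd' => ?_
  by_contra hlt
  push_neg at hlt
  -- derive entropy L < d'
  have hd'0 : (0:ℝ) < d' := by
    have : (0:ℝ≥0∞) < (d' : ℝ≥0∞) := lt_of_le_of_lt zero_le hlt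
    exact_mod_cast this
  have hdR : entropy L < (d' : ℝ) := by
    by_contra h
    push_neg at h
    have h2 := ENNReal.ofReal_le_ofReal h
    rw [ENNReal.ofReal_coe_nnreal] at h2
    exact not_le.mpr hlt h2
  set c : ℝ := (entropy L + d')/2 with hcdef
  have hc1 : entropy L < c := by simp only [hcdef]; linarith
  have hc2 : c < (d':ℝ) := by simp only [hcdef]; linarith
  have hc0 : 0 ≤ c := le_trans hent0 hc1.le
  -- eventually the prefix count is at most r^(c n)
  have hev : ∀ᶠ n in Filter.atTop,
      Real.logb r ((prefixSet L n).ncard) / n < c :=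
    Filter.eventually_lt_of_limsup_lt hc1 hbdd
  have key : ∀ᶠ n in Filter.atTop,
      (((prefixSet L n).ncard : ℝ≥0∞)) ≤ (r:ℝ≥0∞) ^ (c * n) := by
    filter_upwards [hev, Filter.eventually_ge_atTop 1] with n hn hn1
    have hnR : (0:ℝ) < n := by exact_mod_cast hn1
    have hlog : Real.logb r ((prefixSet L n).ncard) < c * n := by
      rw [div_lt_iff₀ hnR] at hn; exact hn
    have hreal : ((prefixSet L n).ncard : ℝ) < (r:ℝ) ^ (c * n) :=
      (Real.logb_lt_iff_lt_rpow hr1 (by linarith [hN1 n])).1 hlog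
    calc ((prefixSet L n).ncard : ℝ≥0∞)
        = ENNReal.ofReal ((prefixSet L n).ncard : ℝ) := by
          rw [ENNReal.ofReal_natCast]
      _ ≤ ENNReal.ofReal ((r:ℝ) ^ (c * n)) := ENNReal.ofReal_le_ofReal hreal.le
      _ = ENNReal.ofReal (r:ℝ) ^ (c * n) :=
          (ENNReal.ofReal_rpow_of_pos (by linarith)).symm
      _ = (r:ℝ≥0∞) ^ (c * n) := by rw [ENNReal.ofReal_natCast]
  -- the covering by cylinders
  letI : ∀ n, Fintype ↥(prefixSet L n) := fun n => (Set.toFinite _).fintype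
  set t : ∀ n : ℕ, ↥(prefixSet L n) → Set (ℕ → α) :=
    fun n w => {x | ∀ j : Fin n, x j.1 = (w : Fin n → α) j} with htdef
  have hinv1 : ((r:ℝ≥0∞))⁻¹ ≤ 1 := by
    rw [ENNReal.inv_le_one]; exact_mod_cast le_trans one_le_two hcard
  have hdiam : ∀ n w, EMetric.diam (t n w) ≤ ((r:ℝ≥0∞))⁻¹ ^ n := by
    intro n w
    apply EMetric.diam_le
    intro x hx y hy
    have hedist : edist x y = wedist x y := rfl
    rw [hedist]
    rcases eq_or_ne x y with h | h
    · simp [wedist, h]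
    · rw [wedist, if_neg h]
      have hfd : n ≤ PiNat.firstDiff x y := by
        by_contra hn
        push_neg at hn
        have := PiNat.apply_firstDiff_ne h
        have hxw := hx ⟨PiNat.firstDiff x y, hn⟩
        have hyw := hy ⟨PiNat.firstDiff x y, hn⟩
        exact this (hxw.trans hyw.symm)
      exact pow_le_pow_of_le_one zero_le hinv1 hfd
  have hcover : ∀ n, L ⊆ ⋃ w, t n w := by
    intro n x hx
    exact Set.mem_iUnion.2 ⟨⟨fun j => x j.1, x, hx, fun j => rfl⟩, fun j => rfl⟩
  have hrad : Filter.Tendsto (fun n : ℕ => ((r:ℝ≥0∞))⁻¹ ^ n) Filter.atTop (nhds 0) :=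
    ENNReal.tendsto_pow_atTop_nhds_zero_of_lt_one (ENNReal.inv_lt_one.2 hr1e)
  have hμ := MeasureTheory.Measure.hausdorffMeasure_le_liminf_sum (d':ℝ) L
    (fun n : ℕ => ((r:ℝ≥0∞))⁻¹ ^ n) hrad t
    (Filter.Eventually.of_forall fun n => hdiam n)
    (Filter.Eventually.of_forall hcover)
  -- bound the sums
  have hsum : ∀ᶠ n in Filter.atTop,
      (∑ w : ↥(prefixSet L n), EMetric.diam (t n w) ^ (d':ℝ))
        ≤ (r:ℝ≥0∞) ^ ((n:ℝ) * (c - d')) := by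
    filter_upwards [key] with n hkey
    have hterm : ((r:ℝ≥0∞)⁻¹ ^ n) ^ (d':ℝ) = (r:ℝ≥0∞) ^ (-((n:ℝ) * d')) := by
      rw [← ENNReal.rpow_natCast ((r:ℝ≥0∞))⁻¹ n, ← ENNReal.rpow_mul,
        ENNReal.inv_rpow, ← ENNReal.rpow_neg]
    calc (∑ w : ↥(prefixSet L n), EMetric.diam (t n w) ^ (d':ℝ))
        ≤ ∑ _w : ↥(prefixSet L n), ((r:ℝ≥0∞)⁻¹ ^ n) ^ (d':ℝ) :=
          Finset.sum_le_sum fun w _ => ENNReal.rpow_le_rpow (hdiam n w) d'.coe_nonneg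
      _ = ((prefixSet L n).ncard : ℝ≥0∞) * ((r:ℝ≥0∞)⁻¹ ^ n) ^ (d':ℝ) := by
          rw [Finset.sum_const, Finset.card_univ, nsmul_eq_mul]
          congr 2
          rw [Set.ncard_eq_toFinset_card', Set.toFinset_card]
      _ ≤ (r:ℝ≥0∞) ^ (c * n) * (r:ℝ≥0∞) ^ (-((n:ℝ) * d')) := by
          rw [hterm]; exact mul_le_mul_left hkey _
      _ = (r:ℝ≥0∞) ^ ((n:ℝ) * (c - d')) := by
          rw [← ENNReal.rpow_add _ _ hr0 hrtop]
          ring_nf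
  have hg : Filter.Tendsto (fun n : ℕ => (r:ℝ≥0∞) ^ ((n:ℝ) * (c - d')))
      Filter.atTop (nhds 0) := by
    have hbase : (r:ℝ≥0∞) ^ (c - (d':ℝ)) < 1 :=
      ENNReal.rpow_lt_one_of_one_lt_of_neg hr1e (by linarith)
    have heq : ∀ n : ℕ, (r:ℝ≥0∞) ^ ((n:ℝ) * (c - d'))
        = ((r:ℝ≥0∞) ^ (c - (d':ℝ))) ^ n := by
      intro n
      rw [mul_comm, ENNReal.rpow_mul, ENNReal.rpow_natCast]
    simp_rw [heq]
    exact ENNReal.tendsto_pow_atTop_nhds_zero_of_lt_one hbase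
  have hzero : μH[(d':ℝ)] L = 0 := by
    refine le_antisymm ?_ zero_le
    calc μH[(d':ℝ)] L
        ≤ Filter.liminf (fun n => ∑ w : ↥(prefixSet L n),
            EMetric.diam (t n w) ^ (d':ℝ)) Filter.atTop := hμ
      _ ≤ Filter.liminf (fun n : ℕ => (r:ℝ≥0∞) ^ ((n:ℝ) * (c - d')))
            Filter.atTop := Filter.liminf_le_liminf hsum
      _ = 0 := hg.liminf_eq
  rw [hd'] at hzero
  exact ENNReal.top_ne_zero hzero
end

section
/- Let Σ be a finite alphabet of size r ≥ 2, let R ⊆ Σ × Σ define the invariant language L_inv = {x : ∀ n, (x n, x (n+1)) ∈ R}, and let P ⊆ Σ. Consider L = L_inv ∩ {x : ∃ N, ∀ n ≥ N, x n ∉ P} (the language of G B_inv ∧ FG ¬B_fair). Then dimH(L) equals dimH of the invariant language L' = {x : ∀ n, (x n, x (n+1)) ∈ R ∧ x n ∉ P ∧ x (n+1) ∉ P}, i.e. the language of G(B_inv ∧ ¬B_fair), provided L' is nonempty. -/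
open Filter MeasureTheory Set
open scoped ENNReal

section AuxW

/-- Type synonym for `ℕ → α` carrying the `wspace` metric. -/
def WSeq (α : Type*) := ℕ → α

noncomputable instance {α : Type*} [Fintype α] : EMetricSpace (WSeq α) := wspace α

variable {α : Type*} [Fintype α]

/-- Prepend a finite word to an infinite sequence. -/
def wprepend (N : ℕ) (w : Fin N → α) (y : WSeq α) : WSeq α :=
  fun i => if h : i < N then w ⟨i, h⟩ else y (i - N)

omit [Fintype α] in
lemma wprepend_apply_add (N : ℕ) (w : Fin N → α) (y : WSeq α) (n : ℕ) :
    wprepend N w y (N + n) = y n := by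
  simp only [wprepend, dif_neg (by omega : ¬ N + n < N)]
  congr 1
  omega

lemma wprepend_lipschitz (N : ℕ) (w : Fin N → α) :
    LipschitzWith 1 (wprepend N w) := by
  apply LipschitzWith.of_edist_le
  intro y y'
  have : Nonempty α := ⟨y 0⟩
  rcases eq_or_ne y y' with h | h
  · subst h; simp
  have hpne : wprepend N w y ≠ wprepend N w y' := by
    intro hEq
    apply h
    funext n
    have := congrFun hEq (N + n)
    rwa [wprepend_apply_add, wprepend_apply_add] at this
  show wedist _ _ ≤ wedist _ _
  simp only [wedist, if_neg h, if_neg hpne]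
  have hq : ((Fintype.card α : ℝ≥0∞))⁻¹ ≤ 1 := by
    rw [ENNReal.inv_le_one]
    exact_mod_cast Nat.one_le_iff_ne_zero.mpr Fintype.card_ne_zero
  refine (le_of_eq (if_neg hpne)).trans (le_trans ?_ (le_of_eq (if_neg h).symm))
  refine pow_le_pow_of_le_one (by simp) hq ?_
  -- firstDiff y y' ≤ firstDiff (wprepend N w y) (wprepend N w y')
  set j := PiNat.firstDiff (wprepend N w y) (wprepend N w y') with hj
  have hdiff : wprepend N w y j ≠ wprepend N w y' j := PiNat.apply_firstDiff_ne hpne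
  have hNj : N ≤ j := by
    by_contra hlt
    push_neg at hlt
    apply hdiff
    simp only [wprepend, dif_pos hlt]
  have hyd : y (j - N) ≠ y' (j - N) := by
    intro hEq
    apply hdiff
    simp only [wprepend, dif_neg (by omega : ¬ j < N), hEq]
  have : PiNat.firstDiff y y' ≤ j - N :=
    not_lt.1 fun hlt => hyd (PiNat.apply_eq_of_lt_firstDiff hlt)
  omega

end AuxW

theorem dimH_invariant_with_fairness_complement {α : Type*} [Fintype α]
    (hcard : 2 ≤ Fintype.card α) (R : Set (α × α)) (P : Set α)
    (hne : Set.Nonempty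
      {x : ℕ → α | ∀ n, (x n, x (n + 1)) ∈ R ∧ x n ∉ P ∧ x (n + 1) ∉ P}) :
    wdimH ({x : ℕ → α | ∀ n, (x n, x (n + 1)) ∈ R} ∩
        {x : ℕ → α | ∃ N, ∀ n ≥ N, x n ∉ P}) =
      wdimH {x : ℕ → α | ∀ n, (x n, x (n + 1)) ∈ R ∧ x n ∉ P ∧ x (n + 1) ∉ P} := by
  classical
  have hdim : ∀ L : Set (ℕ → α), wdimH L = dimH (show Set (WSeq α) from L) := fun _ => rfl
  set S : Set (WSeq α) :=
    {x : ℕ → α | ∀ n, (x n, x (n + 1)) ∈ R ∧ x n ∉ P ∧ x (n + 1) ∉ P} with hS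
  set L : Set (WSeq α) :=
    ({x : ℕ → α | ∀ n, (x n, x (n + 1)) ∈ R} ∩
        {x : ℕ → α | ∃ N, ∀ n ≥ N, x n ∉ P}) with hL
  rw [hdim, hdim]
  change dimH L = dimH S
  apply le_antisymm
  · have hsub : L ⊆ ⋃ p : Σ N : ℕ, Fin N → α, wprepend p.1 p.2 '' S := by
      rintro x ⟨hR, N, hP⟩
      refine Set.mem_iUnion.2 ⟨⟨N, fun j => x j⟩, fun n => x (N + n), ?_, ?_⟩
      · intro n
        exact ⟨hR (N + n), hP (N + n) (Nat.le_add_right _ _),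
          hP (N + n + 1) (by omega)⟩
      · funext i
        simp only [wprepend]
        split
        · rfl
        · next hni =>
            congr 1
            omega
    calc dimH L ≤ dimH (⋃ p : Σ N : ℕ, Fin N → α, wprepend p.1 p.2 '' S) :=
          dimH_mono hsub
      _ = ⨆ p : Σ N : ℕ, Fin N → α, dimH (wprepend p.1 p.2 '' S) := dimH_iUnion _
      _ ≤ dimH S := iSup_le fun p => by
          simpa using (wprepend_lipschitz p.1 p.2).dimH_image_le S
  · apply dimH_mono
    rintro x hx
    exact ⟨fun n => (hx n).1, 0, fun n _ => (hx n).2.1⟩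
end
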